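/- Let G = (V, E) be a simple undirected graph with two strongly connected orientations Λ₁ and Λ₂, let v ∈ V, and let U be the set of vertices that two-reach v in the digraph D₁ = (V, Λ₁). Then the sum over u ∈ U of the indegree of u in Λ₂ is at least the sum over u ∈ U of the indegree of u in Λ₁. -/

import Mathlib

/-- The list of arcs (consecutive pairs) of a list of vertices. -/
def listArcs {V : Type*} (p : List V) : List (V × V) := p.zip p.tail

/-- `p` is a directed path from `u` to `v` in the digraph with arc set `A`. -/
def IsDipath {V : Type*} (A : Finset (V × V)) (u v : V) (p : List V) : Prop :=
  p ≠ [] ∧ p.head? = some u ∧ p.getLast? = some v ∧ p.Nodup ∧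
    p.Chain' (fun a b => (a, b) ∈ A)

/-- Two paths (given as vertex lists) are arc-disjoint. -/
def ArcDisjoint {V : Type*} (p q : List V) : Prop :=
  ∀ e ∈ listArcs p, e ∉ listArcs q

/-- `u` reaches `v`: there is a directed path from `u` to `v`. -/
def Reaches {V : Type*} (A : Finset (V × V)) (u v : V) : Prop :=
  ∃ p, IsDipath A u v p

/-- `u` two-reaches `v`: there are two arc-disjoint directed paths from `u` to `v`. -/
def TwoReaches {V : Type*} (A : Finset (V × V)) (u v : V) : Prop :=
  ∃ p q, IsDipath A u v p ∧ IsDipath A u v q ∧ ArcDisjoint p q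

/-- A digraph is strongly connected if every vertex reaches every other vertex. -/
def StronglyConnected {V : Type*} (A : Finset (V × V)) : Prop :=
  ∀ u v : V, Reaches A u v

/-- The digraph obtained by reversing every arc of the path `p`. -/
def reverseAlong {V : Type*} [DecidableEq V] (A : Finset (V × V)) (p : List V) :
    Finset (V × V) :=
  (A \ (listArcs p).toFinset) ∪ ((listArcs p).map Prod.swap).toFinset

/-- The indegree of a vertex in the digraph with arc set `A`. -/
def inDeg {V : Type*} [DecidableEq V] (A : Finset (V × V)) (v : V) : ℕ :=
  (A.filter (fun e => e.2 = v)).card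

/-- The indegree sequence: the indegrees of all vertices in non-increasing order. -/
def degSeq (V : Type*) [Fintype V] [DecidableEq V] (A : Finset (V × V)) : List ℕ :=
  ((Finset.univ.val.map (inDeg A)).sort (· ≤ ·)).reverse

/-- `A` is an orientation of the simple graph `G`: every edge of `G` gets exactly one
direction, and every arc of `A` comes from an edge of `G`. -/
def IsOrientation {V : Type*} (G : SimpleGraph V) (A : Finset (V × V)) : Prop :=
  (∀ a b : V, G.Adj a b ↔ ((a, b) ∈ A ∨ (b, a) ∈ A)) ∧
    ∀ a b : V, ¬((a, b) ∈ A ∧ (b, a) ∈ A)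

/-- The underlying undirected simple graph of a digraph. -/
def underlying {V : Type*} (A : Finset (V × V)) : SimpleGraph V :=
  SimpleGraph.fromRel (fun a b => (a, b) ∈ A)

/-- `p` is a directed path from `u` to `v` all of whose vertices lie in `S`. -/
def IsDipathIn {V : Type*} (A : Finset (V × V)) (S : Set V) (u v : V) (p : List V) : Prop :=
  IsDipath A u v p ∧ ∀ x ∈ p, x ∈ S

/-- `u` reaches `v` within the induced subdigraph on `S`. -/
def ReachesWithin {V : Type*} (A : Finset (V × V)) (S : Set V) (u v : V) : Prop :=
  ∃ p, IsDipathIn A S u v p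

/-!
Count the arcs with head in `U`. Those with both ends in `U` come from the same edges of `G` in
both orientations. For the arcs entering `U` we use Menger's theorem: `u` two-reaches `v` iff `u`
reaches `v` after the deletion of any single arc. If `a` enters `U` in `Λ₁`, then its tail cannot
reach `v` in `Λ₁ - a`, while the tail of any other arc entering `U` can; as this property is
constant on the components of `G - U`, each component sends at most one arc of `Λ₁` into `U`.
In `Λ₂`, a path from the tail of `a` to `v` enters `U` by an arc whose tail lies in the same
component, which injects the arcs of `Λ₁` entering `U` into those of `Λ₂`.
-/

section

open Finset Relation

variable {V : Type*}

section Paths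

theorem listArcs_cons_cons (a b : V) (l : List V) :
    listArcs (a :: b :: l) = (a, b) :: listArcs (b :: l) := rfl

theorem map_fst_listArcs : ∀ p : List V, (listArcs p).map Prod.fst = p.dropLast
  | [] | [_] => rfl
  | a :: b :: l => by rw [listArcs_cons_cons, List.map_cons, map_fst_listArcs (b :: l)]; rfl

theorem map_snd_listArcs (p : List V) : (listArcs p).map Prod.snd = p.tail :=
  List.map_snd_zip (by simp)

theorem fst_mem_of_mem_listArcs {p : List V} {e : V × V} (h : e ∈ listArcs p) : e.1 ∈ p :=
  (List.of_mem_zip h).1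

theorem nodup_listArcs {p : List V} (h : p.Nodup) : (listArcs p).Nodup :=
  List.Nodup.of_map Prod.fst <| by
    rw [map_fst_listArcs]; exact h.sublist (List.dropLast_sublist p)

theorem isChain_iff_forall_mem_listArcs {R : V → V → Prop} :
    ∀ {p : List V}, p.IsChain R ↔ ∀ e ∈ listArcs p, R e.1 e.2
  | [] | [_] => by simp [listArcs]
  | a :: b :: l => by
    rw [List.isChain_cons_cons, isChain_iff_forall_mem_listArcs, listArcs_cons_cons,
      List.forall_mem_cons]

theorem IsDipath.mem_of_mem_listArcs {A : Finset (V × V)} {u v : V} {p : List V}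
    (hp : IsDipath A u v p) {e : V × V} (he : e ∈ listArcs p) : e ∈ A :=
  isChain_iff_forall_mem_listArcs.1 hp.2.2.2.2 e he

theorem IsDipath.mono {A B : Finset (V × V)} {u v : V} {p : List V} (hAB : A ⊆ B)
    (hp : IsDipath A u v p) : IsDipath B u v p :=
  ⟨hp.1, hp.2.1, hp.2.2.1, hp.2.2.2.1, hp.2.2.2.2.imp fun _ _ h => hAB h⟩

theorem IsDipath.erase [DecidableEq V] {A : Finset (V × V)} {u v : V} {p : List V}
    (hp : IsDipath A u v p) {e : V × V} (he : e ∉ listArcs p) : IsDipath (A.erase e) u v p :=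
  ⟨hp.1, hp.2.1, hp.2.2.1, hp.2.2.2.1, isChain_iff_forall_mem_listArcs.2 fun _ hf =>
    mem_erase.2 ⟨fun hfe => he (hfe ▸ hf), hp.mem_of_mem_listArcs hf⟩⟩

theorem isDipath_singleton (A : Finset (V × V)) (u : V) : IsDipath A u u [u] :=
  ⟨List.cons_ne_nil _ _, rfl, rfl, List.nodup_singleton u, List.isChain_singleton u⟩

theorem reaches_refl (A : Finset (V × V)) (u : V) : Reaches A u u :=
  ⟨[u], isDipath_singleton A u⟩

theorem Reaches.mono {A B : Finset (V × V)} {u v : V} (hAB : A ⊆ B) (h : Reaches A u v) :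
    Reaches B u v :=
  let ⟨p, hp⟩ := h; ⟨p, hp.mono hAB⟩

/-- If `a` already lies on the path, the path is cut there. -/
theorem Reaches.head {A : Finset (V × V)} {a b c : V} (hab : (a, b) ∈ A) (h : Reaches A b c) :
    Reaches A a c := by
  obtain ⟨p, -, hb, hc, hnd, hch⟩ := h
  obtain ⟨t, rfl⟩ := List.head?_eq_some_iff.1 hb
  by_cases ha : a ∈ b :: t
  · obtain ⟨l₁, l₂, hsplit⟩ := List.append_of_mem ha
    have hsuffix : a :: l₂ <:+ b :: t := hsplit ▸ List.suffix_append l₁ (a :: l₂)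
    refine ⟨a :: l₂, by simp, rfl, ?_, hnd.sublist hsuffix.sublist, hch.suffix hsuffix⟩
    rw [← hc, hsplit, List.getLast?_append_of_ne_nil _ (List.cons_ne_nil _ _)]
  · exact ⟨a :: b :: t, by simp, rfl, by rwa [List.getLast?_cons_cons],
      List.nodup_cons.2 ⟨ha, hnd⟩, List.isChain_cons_cons.2 ⟨hab, hch⟩⟩

theorem reaches_iff_reflTransGen {A : Finset (V × V)} {u v : V} :
    Reaches A u v ↔ ReflTransGen (fun a b => (a, b) ∈ A) u v := by
  constructor
  · rintro ⟨p, -, hu, hv, -, hch⟩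
    obtain ⟨t, rfl⟩ := List.head?_eq_some_iff.1 hu
    exact List.relationReflTransGen_of_exists_isChain_cons t hch
      (Option.some_inj.1 ((List.getLast?_eq_some_getLast _).symm.trans hv))
  · intro h
    induction h using ReflTransGen.head_induction_on with
    | refl => exact reaches_refl A v
    | head hab _ ih => exact ih.head hab

theorem Reaches.tail {A : Finset (V × V)} {a b c : V} (h : Reaches A a b) (hbc : (b, c) ∈ A) :
    Reaches A a c :=
  reaches_iff_reflTransGen.2 ((reaches_iff_reflTransGen.1 h).tail hbc)

theorem Reaches.exists_arc_leaving {A : Finset (V × V)} {u v : V} (h : Reaches A u v)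
    {P : V → Prop} (hu : P u) (hv : ¬P v) : ∃ s t, (s, t) ∈ A ∧ P s ∧ ¬P t := by
  rw [reaches_iff_reflTransGen] at h
  induction h using ReflTransGen.head_induction_on with
  | refl => exact absurd hu hv
  | @head s t hst _ ih => by_cases ht : P t; exacts [ih ht, ⟨s, t, hst, hu, ht⟩]

theorem Reaches.erase_or [DecidableEq V] {A : Finset (V × V)} {u v : V} (h : Reaches A u v)
    (d : V × V) : Reaches (A.erase d) u v ∨ Reaches A d.2 v := by
  rw [reaches_iff_reflTransGen] at h
  induction h using ReflTransGen.head_induction_on with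
  | refl => exact Or.inl (reaches_refl _ v)
  | @head s t hst hrest ih =>
    by_cases hd : (s, t) = d
    · exact Or.inr (hd ▸ reaches_iff_reflTransGen.2 hrest)
    · exact ih.imp_left (Reaches.head (mem_erase.2 ⟨hd, hst⟩))

theorem twoReaches_self (A : Finset (V × V)) (u : V) : TwoReaches A u u :=
  ⟨[u], [u], isDipath_singleton A u, isDipath_singleton A u, by simp [ArcDisjoint, listArcs]⟩

theorem TwoReaches.reaches_erase [DecidableEq V] {A : Finset (V × V)} {u v : V}
    (h : TwoReaches A u v) (e : V × V) : Reaches (A.erase e) u v := by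
  obtain ⟨p, q, hp, hq, hpq⟩ := h
  by_cases he : e ∈ listArcs p
  · exact ⟨q, hq.erase (hpq e he)⟩
  · exact ⟨p, hp.erase he⟩

theorem head_of_mem_of_backward_closed {P : V → Prop} {p : List V} {x c : V}
    (hback : ∀ e ∈ listArcs p, P e.2 → P e.1) (hx : p.head? = some x) (hc : c ∈ p) (hPc : P c) :
    P x := by
  obtain ⟨t, rfl⟩ := List.head?_eq_some_iff.1 hx
  by_contra hPx
  exact List.IsChain.induction (fun i => ¬P i) (x :: t)
    (isChain_iff_forall_mem_listArcs (R := fun a b => P b → P a) |>.2 hback)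
    (fun _ _ hab hna hb => hna (hab hb))
    (fun _ => hPx) c hc hPc

theorem exists_mem_listArcs_leaving_unique {P : V → Prop} : ∀ {p : List V} {x y : V},
    p.head? = some x → p.getLast? = some y → P x → ¬P y →
    (∀ e ∈ listArcs p, P e.2 → P e.1) →
    ∃ e₀ ∈ listArcs p, P e₀.1 ∧ ¬P e₀.2 ∧ ∀ e ∈ listArcs p, P e.1 → ¬P e.2 → e = e₀
  | [], _, _, hx, _, _, _, _ => by simp at hx
  | [_], _, _, hx, hy, hPx, hPy, _ => by
    simp only [List.head?_cons, List.getLast?_singleton, Option.some_inj] at hx hy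
    exact absurd (hy ▸ hx ▸ hPx) hPy
  | a :: b :: t, x, y, hx, hy, hPx, hPy, hback => by
    obtain rfl : a = x := Option.some_inj.1 hx
    rw [List.getLast?_cons_cons] at hy
    rw [listArcs_cons_cons] at hback ⊢
    simp only [List.forall_mem_cons] at hback ⊢
    by_cases hPb : P b
    · obtain ⟨e₀, he₀, h₁, h₂, huniq⟩ :=
        exists_mem_listArcs_leaving_unique rfl hy hPb hPy hback.2
      exact ⟨e₀, List.mem_cons_of_mem _ he₀, h₁, h₂, fun _ hPb' => absurd hPb hPb', huniq⟩
    · refine ⟨(a, b), List.mem_cons_self, hPx, hPb, fun _ _ => rfl, fun e he h₁ _ => ?_⟩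
      exact (hPb (head_of_mem_of_backward_closed hback.2 rfl (fst_mem_of_mem_listArcs he) h₁)).elim

end Paths

section NetOutflow

variable [DecidableEq V]

def outDeg (A : Finset (V × V)) (v : V) : ℕ := (A.filter (fun e => e.1 = v)).card

def netOutflow (A : Finset (V × V)) (v : V) : ℤ := outDeg A v - inDeg A v

theorem sum_card_filter_eq {α β : Type*} [DecidableEq β] (s : Finset α) (f : α → β)
    (t : Finset β) : ∑ b ∈ t, #(s.filter (f · = b)) = #(s.filter (f · ∈ t)) := by
  rw [card_eq_sum_card_fiberwise (s := s.filter (f · ∈ t)) fun a ha => (mem_filter.1 ha).2]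
  refine sum_congr rfl fun b hb => congrArg card ?_
  rw [filter_filter]
  exact filter_congr fun a _ => ⟨fun h => ⟨h ▸ hb, h⟩, fun h => h.2⟩

theorem sum_inDeg (A : Finset (V × V)) (S : Finset V) :
    ∑ z ∈ S, inDeg A z = #(A.filter (·.2 ∈ S)) :=
  sum_card_filter_eq A Prod.snd S

theorem sum_outDeg (A : Finset (V × V)) (S : Finset V) :
    ∑ z ∈ S, outDeg A z = #(A.filter (·.1 ∈ S)) :=
  sum_card_filter_eq A Prod.fst S

theorem card_filter_union_of_disjoint {α : Type*} [DecidableEq α] {s t : Finset α}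
    (h : Disjoint s t) (p : α → Prop) [DecidablePred p] :
    #((s ∪ t).filter p) = #(s.filter p) + #(t.filter p) := by
  rw [filter_union, card_union_of_disjoint (disjoint_filter_filter h)]

theorem netOutflow_union {F H : Finset (V × V)} (h : Disjoint F H) (z : V) :
    netOutflow (F ∪ H) z = netOutflow F z + netOutflow H z := by
  simp only [netOutflow, outDeg, inDeg, card_filter_union_of_disjoint h]
  push_cast; ring

theorem netOutflow_sdiff {F H : Finset (V × V)} (h : H ⊆ F) (z : V) :
    netOutflow (F \ H) z = netOutflow F z - netOutflow H z := by
  conv_rhs => rw [← sdiff_union_of_subset h, netOutflow_union sdiff_disjoint]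
  ring

theorem netOutflow_image_swap (F : Finset (V × V)) (z : V) :
    netOutflow (F.image Prod.swap) z = -netOutflow F z := by
  have hswap (p : V × V → Prop) [DecidablePred p] :
      #((F.image Prod.swap).filter p) = #(F.filter (p ∘ Prod.swap)) := by
    rw [filter_image, card_image_of_injective _ Prod.swap_injective]; rfl
  simp only [netOutflow, outDeg, inDeg, hswap]
  simp only [Function.comp_def, Prod.fst_swap, Prod.snd_swap]
  ring

theorem card_filter_toFinset {α β : Type*} [DecidableEq α] [DecidableEq β] {l : List α}
    (hl : l.Nodup) (f : α → β) (b : β) : #(l.toFinset.filter (f · = b)) = (l.map f).count b := by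
  induction l with
  | nil => simp
  | cons a t ih =>
    rw [List.nodup_cons] at hl
    rw [List.toFinset_cons, filter_insert]
    by_cases hfa : f a = b
    · rw [if_pos hfa, card_insert_of_notMem (by simp [hl.1]), ih hl.2]
      simp [hfa]
    · rw [if_neg hfa, ih hl.2]
      simp [hfa]

theorem netOutflow_listArcs {p : List V} {x y : V} (hx : p.head? = some x)
    (hy : p.getLast? = some y) (hnd : p.Nodup) (z : V) :
    netOutflow (listArcs p).toFinset z = (if z = x then 1 else 0) - if z = y then 1 else 0 := by
  have hne : p ≠ [] := by rintro rfl; simp at hx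
  have hout : outDeg (listArcs p).toFinset z + (if z = y then 1 else 0) = p.count z := by
    rw [outDeg, card_filter_toFinset (nodup_listArcs hnd), map_fst_listArcs]
    conv_rhs => rw [← List.dropLast_append_getLast hne]
    rw [List.getLast?_eq_some_getLast hne, Option.some_inj] at hy
    simp only [hy, List.count_append, List.count_singleton, beq_iff_eq]
    exact congrArg _ (if_congr eq_comm rfl rfl)
  have hin : inDeg (listArcs p).toFinset z + (if z = x then 1 else 0) = p.count z := by
    rw [inDeg, card_filter_toFinset (nodup_listArcs hnd), map_snd_listArcs]
    obtain ⟨t, rfl⟩ := List.head?_eq_some_iff.1 hx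
    simp only [List.tail_cons, List.count_cons, beq_iff_eq]
    exact congrArg _ (if_congr eq_comm rfl rfl)
  rw [netOutflow]
  split_ifs at hout hin ⊢ <;> omega

/-- The vertices reachable from `x` form a set no arc leaves, so their total net outflow is
`≤ 0`. -/
theorem reaches_of_netOutflow_pos [Fintype V] {F : Finset (V × V)} {x y : V}
    (hx : 0 < netOutflow F x) (hbal : ∀ z, z ≠ x → z ≠ y → netOutflow F z = 0) :
    Reaches F x y := by
  classical
  by_contra hy
  set S := univ.filter (Reaches F x)
  have hxS : x ∈ S := mem_filter.2 ⟨mem_univ x, reaches_refl F x⟩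
  have hclosed : F.filter (·.1 ∈ S) ⊆ F.filter (·.2 ∈ S) := fun e he => by
    simp only [S, mem_filter, mem_univ, true_and] at he ⊢
    exact ⟨he.1, he.2.tail he.1⟩
  have hsum : ∑ z ∈ S, netOutflow F z ≤ 0 := by
    simp only [netOutflow, sum_sub_distrib, ← Nat.cast_sum, sum_outDeg, sum_inDeg]
    exact sub_nonpos.2 (Nat.cast_le.2 (card_le_card hclosed))
  rw [sum_eq_single_of_mem x hxS fun z hz hzx =>
    hbal z hzx fun hzy => hy (hzy ▸ (mem_filter.1 hz).2)] at hsum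
  omega

end NetOutflow

section Menger

variable [DecidableEq V]

theorem mem_reverseAlong {A : Finset (V × V)} {p : List V} {e : V × V} :
    e ∈ reverseAlong A p ↔ e ∈ A ∧ e ∉ listArcs p ∨ e.swap ∈ listArcs p := by
  simp only [reverseAlong, mem_union, mem_sdiff, List.mem_toFinset, List.mem_map]
  exact or_congr_right ⟨fun ⟨f, hf, hfe⟩ => hfe ▸ hf, fun h => ⟨e.swap, h, e.swap_swap⟩⟩

/-- Otherwise the set of vertices reachable from `x` in the residual digraph is left by only one
arc of `A`, the unique arc of `p` leaving it, and deleting that arc separates `x` from `y`. -/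
theorem reaches_reverseAlong {A : Finset (V × V)} {p : List V} {x y : V}
    (hp : IsDipath A x y p) (hrob : ∀ e, Reaches (A.erase e) x y) :
    Reaches (reverseAlong A p) x y := by
  by_contra hy
  obtain ⟨e₀, -, -, -, huniq⟩ := exists_mem_listArcs_leaving_unique hp.2.1 hp.2.2.1
    (reaches_refl _ x) hy fun e he h => h.tail (mem_reverseAlong.2 (Or.inr (by simpa using he)))
  obtain ⟨s, t, hst, hs, ht⟩ := (hrob e₀).exists_arc_leaving (reaches_refl _ x) hy
  obtain ⟨hne, hstA⟩ := mem_erase.1 hst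
  by_cases hmem : (s, t) ∈ listArcs p
  · exact hne (huniq _ hmem hs ht)
  · exact ht (hs.tail (mem_reverseAlong.2 (Or.inl ⟨hstA, hmem⟩)))

/-- `F` is `P ∪ Q` with each arc of `P` cancelled against its reverse in `Q`. -/
theorem exists_subset_netOutflow_eq_add {A P Q : Finset (V × V)}
    (hA : ∀ a b : V, ¬((a, b) ∈ A ∧ (b, a) ∈ A)) (hP : P ⊆ A)
    (hQ : ∀ e ∈ Q, e ∈ A ∧ e ∉ P ∨ e.swap ∈ P) :
    ∃ F ⊆ A, ∀ z, netOutflow F z = netOutflow P z + netOutflow Q z := by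
  set R := P.filter (·.swap ∈ Q)
  have hswap : ∀ e ∈ P, e.swap ∉ A := fun e he h => hA e.1 e.2 ⟨hP he, h⟩
  have hQA : Q \ A = R.image Prod.swap := by
    ext e
    simp only [R, mem_sdiff, mem_image, mem_filter]
    constructor
    · rintro ⟨heQ, heA⟩
      refine ⟨e.swap, ⟨?_, by simpa using heQ⟩, e.swap_swap⟩
      exact (hQ e heQ).resolve_left fun h => heA h.1
    · rintro ⟨r, ⟨hrP, hrQ⟩, rfl⟩
      exact ⟨hrQ, hswap r hrP⟩
  have hdisj : Disjoint (P \ R) (Q ∩ A) := by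
    refine disjoint_left.2 fun e he he' => ?_
    obtain ⟨heQ, heA⟩ := mem_inter.1 he'
    rcases hQ e heQ with h | h
    · exact h.2 (mem_sdiff.1 he).1
    · exact hswap _ h (by simpa using heA)
  refine ⟨(P \ R) ∪ (Q ∩ A), union_subset (sdiff_subset.trans hP) inter_subset_right, fun z => ?_⟩
  have hQsplit : netOutflow Q z = netOutflow (Q ∩ A) z - netOutflow R z := by
    rw [← neg_neg (netOutflow R z), ← netOutflow_image_swap, ← hQA, ← sdiff_inter_self_left,
      netOutflow_sdiff inter_subset_left]
    ring
  rw [netOutflow_union hdisj, netOutflow_sdiff (filter_subset _ _), hQsplit]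
  ring

theorem twoReaches_of_netOutflow_eq_two [Fintype V] {A F : Finset (V × V)} {x y : V}
    (hFA : F ⊆ A) (hx : netOutflow F x = 2) (hbal : ∀ z, z ≠ x → z ≠ y → netOutflow F z = 0) :
    TwoReaches A x y := by
  obtain ⟨p, hp⟩ := reaches_of_netOutflow_pos (by omega) hbal
  set P := (listArcs p).toFinset
  have hPF : P ⊆ F := fun e he => hp.mem_of_mem_listArcs (List.mem_toFinset.1 he)
  have hPnet := netOutflow_listArcs hp.2.1 hp.2.2.1 hp.2.2.2.1
  obtain ⟨q, hq⟩ : Reaches (F \ P) x y := by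
    refine reaches_of_netOutflow_pos ?_ fun z hzx hzy => ?_
    · rw [netOutflow_sdiff hPF, hx, hPnet]
      split_ifs <;> norm_num
    · rw [netOutflow_sdiff hPF, hbal z hzx hzy, hPnet]
      simp [hzx, hzy]
  refine ⟨p, q, hp.mono hFA, hq.mono (sdiff_subset.trans hFA), fun e hep heq => ?_⟩
  exact (mem_sdiff.1 (hq.mem_of_mem_listArcs heq)).2 (List.mem_toFinset.2 hep)

/-- Menger's theorem for two arc-disjoint paths, by one augmentation of a first path. -/
theorem twoReaches_of_forall_reaches_erase [Fintype V] {A : Finset (V × V)} {x y : V}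
    (hA : ∀ a b : V, ¬((a, b) ∈ A ∧ (b, a) ∈ A)) (h : ∀ e, Reaches (A.erase e) x y) :
    TwoReaches A x y := by
  rcases eq_or_ne x y with rfl | hxy
  · exact twoReaches_self A x
  obtain ⟨p, hp⟩ := (h (x, x)).mono (erase_subset _ _)
  obtain ⟨q, hq⟩ := reaches_reverseAlong hp h
  obtain ⟨F, hFA, hF⟩ := exists_subset_netOutflow_eq_add (P := (listArcs p).toFinset)
    (Q := (listArcs q).toFinset) hA
    (fun e he => hp.mem_of_mem_listArcs (List.mem_toFinset.1 he))
    (fun e he => by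
      simpa using mem_reverseAlong.1 (hq.mem_of_mem_listArcs (List.mem_toFinset.1 he)))
  have hnet (z : V) : netOutflow F z = 2 * ((if z = x then 1 else 0) - if z = y then 1 else 0) := by
    rw [hF, netOutflow_listArcs hp.2.1 hp.2.2.1 hp.2.2.2.1,
      netOutflow_listArcs hq.2.1 hq.2.2.1 hq.2.2.2.1]
    ring
  exact twoReaches_of_netOutflow_eq_two hFA (by simp [hnet, hxy])
    fun z hzx hzy => by simp [hnet, hzx, hzy]

theorem twoReaches_iff_forall_reaches_erase [Fintype V] {A : Finset (V × V)} {x y : V}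
    (hA : ∀ a b : V, ¬((a, b) ∈ A ∧ (b, a) ∈ A)) :
    TwoReaches A x y ↔ ∀ e, Reaches (A.erase e) x y :=
  ⟨TwoReaches.reaches_erase, twoReaches_of_forall_reaches_erase hA⟩

end Menger

theorem reflTransGen_iff_of_forall {α : Type*} {r : α → α → Prop} {P : α → Prop}
    (hP : ∀ a b, r a b → (P a ↔ P b)) {x y : α} (h : ReflTransGen r x y) : P x ↔ P y := by
  induction h with
  | refl => rfl
  | tail _ hbc ih => exact ih.trans (hP _ _ hbc)

section Orientation

variable [DecidableEq V] {G : SimpleGraph V} {A : Finset (V × V)} {U : Finset V} {v : V}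

def AdjOutside (G : SimpleGraph V) (U : Finset V) (s t : V) : Prop :=
  s ∉ U ∧ t ∉ U ∧ G.Adj s t

theorem exists_arc_into_of_reaches (hAG : ∀ a b, (a, b) ∈ A → G.Adj a b) (hvU : v ∈ U)
    {x : V} (hx : x ∉ U) (h : Reaches A x v) :
    ∃ g ∈ A, g.1 ∉ U ∧ g.2 ∈ U ∧ ReflTransGen (AdjOutside G U) x g.1 := by
  rw [reaches_iff_reflTransGen] at h
  induction h using ReflTransGen.head_induction_on with
  | refl => exact absurd hvU hx
  | @head s t hst _ ih =>
    by_cases htU : t ∈ U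
    · exact ⟨(s, t), hst, hx, htU, ReflTransGen.refl⟩
    · obtain ⟨g, hg, hg1, hg2, hconn⟩ := ih htU
      exact ⟨g, hg, hg1, hg2, ReflTransGen.head ⟨hx, htU, hAG s t hst⟩ hconn⟩

theorem reaches_erase_snd_of_not_reaches_erase {a e : V × V} {s : V}
    (h : Reaches (A.erase a) s v) (h' : ¬Reaches (A.erase e) s v) : Reaches (A.erase a) e.2 v :=
  (h.erase_or e).resolve_left fun h'' => h' (h''.mono (erase_subset_erase e (erase_subset a A)))

theorem reaches_erase_fst_of_mem (hU : ∀ u, u ∈ U ↔ ∀ e, Reaches (A.erase e) u v)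
    {b e : V × V} (hb : b ∈ A) (hbe : b ≠ e) (hb2 : b.2 ∈ U) :
    Reaches (A.erase e) b.1 v :=
  ((hU b.2).1 hb2 e).head (mem_erase.2 ⟨hbe, hb⟩)

theorem not_reaches_erase_fst (hU : ∀ u, u ∈ U ↔ ∀ e, Reaches (A.erase e) u v)
    {a : V × V} (ha : a ∈ A) (ha1 : a.1 ∉ U) (ha2 : a.2 ∈ U) :
    ¬Reaches (A.erase a) a.1 v := fun h =>
  ha1 <| (hU a.1).2 fun e => by
    rcases eq_or_ne a e with rfl | hae
    exacts [h, reaches_erase_fst_of_mem hU ha hae ha2]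

/-- As `s ∉ U`, some arc `e ≠ a` separates `s` from `v`; then `t` reaches `v` neither avoiding `a`
nor avoiding `e`, and the arc by which a path from `t` to `v` first escapes one of these two
conditions can be neither `a` nor `e`. -/
theorem reaches_erase_snd_of_arc (hU : ∀ u, u ∈ U ↔ ∀ e, Reaches (A.erase e) u v)
    (hsc : StronglyConnected A) {a : V × V} (ha : a ∈ A)
    (ha2 : a.2 ∈ U) {s t : V} (hst : (s, t) ∈ A) (hs : s ∉ U) (h : Reaches (A.erase a) s v) :
    Reaches (A.erase a) t v := by
  by_contra ht
  obtain ⟨e, he⟩ : ∃ e, ¬Reaches (A.erase e) s v := not_forall.1 fun h' => hs ((hU s).2 h')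
  have hest : e ≠ (s, t) := by
    rintro rfl
    exact ht (reaches_erase_snd_of_not_reaches_erase h he)
  have hte : ¬Reaches (A.erase e) t v := fun h' => he (h'.head (mem_erase.2 ⟨hest.symm, hst⟩))
  obtain ⟨x, y, hxy, ⟨hxa, hxe⟩, hy⟩ := (hsc t v).exists_arc_leaving
    (P := fun w => ¬Reaches (A.erase a) w v ∧ ¬Reaches (A.erase e) w v) ⟨ht, hte⟩
    fun h' => h'.1 (reaches_refl _ v)
  by_cases hya : Reaches (A.erase a) y v
  · obtain rfl : (x, y) = a := by
      by_contra hne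
      exact hxa (hya.head (mem_erase.2 ⟨hne, hxy⟩))
    exact hxe (reaches_erase_fst_of_mem hU ha (fun hae => he (hae ▸ h)) ha2)
  · obtain rfl : (x, y) = e := by
      by_contra hne
      exact hy ⟨hya, fun hye => hxe (hye.head (mem_erase.2 ⟨hne, hxy⟩))⟩
    exact hya (reaches_erase_snd_of_not_reaches_erase h he)

theorem reaches_erase_iff_of_arc (hU : ∀ u, u ∈ U ↔ ∀ e, Reaches (A.erase e) u v)
    (hsc : StronglyConnected A) {a : V × V} (ha : a ∈ A)
    (ha2 : a.2 ∈ U) {s t : V} (hst : (s, t) ∈ A) (hs : s ∉ U) (ht : t ∉ U) :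
    Reaches (A.erase a) s v ↔ Reaches (A.erase a) t v :=
  ⟨reaches_erase_snd_of_arc hU hsc ha ha2 hst hs,
    fun h => h.head (mem_erase.2 ⟨fun hsta => by subst hsta; exact ht ha2, hst⟩)⟩

theorem reaches_erase_iff_of_adjOutside (hU : ∀ u, u ∈ U ↔ ∀ e, Reaches (A.erase e) u v)
    (hor : IsOrientation G A) (hsc : StronglyConnected A)
    {a : V × V} (ha : a ∈ A) (ha2 : a.2 ∈ U) {s t : V} (hst : AdjOutside G U s t) :
    Reaches (A.erase a) s v ↔ Reaches (A.erase a) t v := by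
  obtain ⟨hs, ht, hadj⟩ := hst
  rcases (hor.1 s t).1 hadj with h | h
  exacts [reaches_erase_iff_of_arc hU hsc ha ha2 h hs ht,
    (reaches_erase_iff_of_arc hU hsc ha ha2 h ht hs).symm]

/-- Distinct arcs into `U` have tails in distinct components of `G - U`: the tail of `a` cannot
reach `v` avoiding `a`, the tail of `b` can, and this property is constant on components. -/
theorem eq_of_reflTransGen_adjOutside (hU : ∀ u, u ∈ U ↔ ∀ e, Reaches (A.erase e) u v)
    (hor : IsOrientation G A) (hsc : StronglyConnected A)
    {a b : V × V} (ha : a ∈ A) (ha1 : a.1 ∉ U) (ha2 : a.2 ∈ U) (hb : b ∈ A) (hb2 : b.2 ∈ U)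
    {w : V} (haw : ReflTransGen (AdjOutside G U) a.1 w)
    (hbw : ReflTransGen (AdjOutside G U) b.1 w) : a = b := by
  by_contra hab
  have hconst {x : V} (hx : ReflTransGen (AdjOutside G U) x w) :
      Reaches (A.erase a) x v ↔ Reaches (A.erase a) w v :=
    reflTransGen_iff_of_forall (P := fun z => Reaches (A.erase a) z v)
      (fun _ _ => reaches_erase_iff_of_adjOutside hU hor hsc ha ha2) hx
  exact not_reaches_erase_fst hU ha ha1 ha2
    ((hconst haw).2 ((hconst hbw).1 (reaches_erase_fst_of_mem hU hb (Ne.symm hab) hb2)))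

theorem card_filter_entering_le {A₁ A₂ : Finset (V × V)} (hor₁ : IsOrientation G A₁)
    (hsc₁ : StronglyConnected A₁) (hor₂ : IsOrientation G A₂) (hsc₂ : StronglyConnected A₂)
    (hU : ∀ u, u ∈ U ↔ ∀ e, Reaches (A₁.erase e) u v) :
    #(A₁.filter fun e => e.1 ∉ U ∧ e.2 ∈ U) ≤ #(A₂.filter fun e => e.1 ∉ U ∧ e.2 ∈ U) := by
  have hvU : v ∈ U := (hU v).2 fun _ => reaches_refl _ v
  have hcross : ∀ e ∈ A₁.filter (fun e => e.1 ∉ U ∧ e.2 ∈ U),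
      ∃ g ∈ A₂.filter (fun e => e.1 ∉ U ∧ e.2 ∈ U), ReflTransGen (AdjOutside G U) e.1 g.1 := by
    intro e he
    obtain ⟨g, hg, hg1, hg2, hconn⟩ := exists_arc_into_of_reaches
      (fun a b h => (hor₂.1 a b).2 (Or.inl h)) hvU (mem_filter.1 he).2.1 (hsc₂ e.1 v)
    exact ⟨g, mem_filter.2 ⟨hg, hg1, hg2⟩, hconn⟩
  choose! f hf hconn using hcross
  refine card_le_card_of_injOn f hf fun a ha b hb hab => ?_
  obtain ⟨haA, ha1, ha2⟩ := mem_filter.1 ha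
  obtain ⟨hbA, -, hb2⟩ := mem_filter.1 hb
  exact eq_of_reflTransGen_adjOutside hU hor₁ hsc₁ haA ha1 ha2 hbA hb2 (hconn a ha)
    (hab ▸ hconn b hb)

theorem card_filter_le_of_isOrientation {A₁ A₂ : Finset (V × V)} (hor₁ : IsOrientation G A₁)
    (hor₂ : IsOrientation G A₂) (p : V × V → Prop) [DecidablePred p]
    (hp : ∀ a b, p (a, b) → p (b, a)) : #(A₁.filter p) ≤ #(A₂.filter p) := by
  refine card_le_card_of_injOn (fun e => if e ∈ A₂ then e else e.swap) (fun e he => ?_)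
    fun e he f hf hef => ?_
  · obtain ⟨heA, hpe⟩ := mem_filter.1 he
    have hadj : G.Adj e.1 e.2 := (hor₁.1 _ _).2 (Or.inl heA)
    dsimp only
    split_ifs with h
    · exact mem_filter.2 ⟨h, hpe⟩
    · exact mem_filter.2 ⟨((hor₂.1 _ _).1 hadj).resolve_left h, hp _ _ hpe⟩
  · have heA := (mem_filter.1 he).1
    have hfA := (mem_filter.1 hf).1
    dsimp only at hef
    split_ifs at hef
    · exact hef
    · exact absurd ⟨hfA, (hef ▸ heA : f.swap ∈ A₁)⟩ (hor₁.2 f.1 f.2)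
    · exact absurd ⟨heA, (hef ▸ hfA : e.swap ∈ A₁)⟩ (hor₁.2 e.1 e.2)
    · exact Prod.swap_injective hef

theorem card_filter_snd_mem (A : Finset (V × V)) (U : Finset V) :
    #(A.filter (·.2 ∈ U)) =
      #(A.filter fun e => e.1 ∈ U ∧ e.2 ∈ U) + #(A.filter fun e => e.1 ∉ U ∧ e.2 ∈ U) := by
  rw [← card_filter_add_card_filter_not (fun e : V × V => e.1 ∈ U), filter_filter, filter_filter]
  simp only [and_comm]

end Orientation

end

/-- For two strongly connected orientations `A₁`, `A₂` of a simple graph `G`, if `U` is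
the set of vertices two-reaching `v` in `A₁`, then the sum over `U` of indegrees in `A₂`
is at least the sum over `U` of indegrees in `A₁`. -/
theorem stmt_13 {V : Type*} [Fintype V] [DecidableEq V] (G : SimpleGraph V)
    (A₁ A₂ : Finset (V × V))
    (hor₁ : IsOrientation G A₁) (hsc₁ : StronglyConnected A₁)
    (hor₂ : IsOrientation G A₂) (hsc₂ : StronglyConnected A₂)
    (v : V) (U : Finset V) (hU : ∀ u : V, u ∈ U ↔ TwoReaches A₁ u v) :
    ∑ u ∈ U, inDeg A₁ u ≤ ∑ u ∈ U, inDeg A₂ u := by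
  have hU' (u : V) : u ∈ U ↔ ∀ e, Reaches (A₁.erase e) u v :=
    (hU u).trans (twoReaches_iff_forall_reaches_erase hor₁.2)
  rw [sum_inDeg, sum_inDeg, card_filter_snd_mem, card_filter_snd_mem]
  exact add_le_add (card_filter_le_of_isOrientation hor₁ hor₂ _ fun _ _ h => h.symm)
    (card_filter_entering_le hor₁ hsc₁ hor₂ hsc₂ hU')
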